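/- Fix a prime p, an additive character ψ of ℚ_p with conductor ℤ_p, an integer c ≥ 1, and a continuous group homomorphism ω : ℤ_pˣ → ℂˣ with conductor exponent c. Let μ be a Haar measure on the additive group ℚ_p. Then for every y ∈ ℚ_p whose p-adic norm satisfies ‖y‖ ≠ p^c, one has ∫_{ℤ_pˣ} ω(z) ψ(yz) dμ(z) = 0. -/

import Mathlib

/-!
After extending `ω` by zero off `ℤ_pˣ`, the integral `G = ∫ ω(z) ψ(yz) dμ(z)` is taken over all
of `ℚ_p`; a Haar-measure-preserving change of variables that multiplies the integrand by a
constant `≠ 1` forces `G = 0`. If `‖y‖ ≤ p^(c-1)`, dilate by a unit `z₀ ∈ 1 + p^(c-1)ℤ_p` with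
`ω z₀ ≠ 1`: the factor `ψ(y·)` does not notice, and `G` picks up `ω z₀`. Since `‖y‖` is a power
of `p`, otherwise `‖y‖ ≥ p^(c+1)`; translate by `s = x₀ / y` with `ψ x₀ ≠ 1`: now
`s ∈ p^c ℤ_p`, so `ω` does not notice, and `G` picks up `ψ x₀`.
-/

open MeasureTheory Measure TopologicalSpace

theorem ContinuousAddEquiv.measurePreserving_of_preimage_eq {G : Type*} [AddGroup G]
    [TopologicalSpace G] [IsTopologicalAddGroup G] [T2Space G] [LocallyCompactSpace G]
    [SecondCountableTopology G] [MeasurableSpace G] [BorelSpace G] (μ : Measure G) [μ.IsAddHaarMeasure] (e : G ≃ₜ+ G)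
    (K : PositiveCompacts G) (hK : e ⁻¹' K = K) : MeasurePreserving e μ μ := by
  have he : Measurable e := e.continuous.measurable
  refine ⟨he, ?_⟩
  calc μ.map e = μ.map e K • addHaarMeasure K := addHaarMeasure_unique _ K
    _ = μ K • addHaarMeasure K := by rw [map_apply he K.isCompact.measurableSet, hK]
    _ = μ := (addHaarMeasure_unique μ K).symm

theorem measurePreserving_mul_left_of_norm_eq_one {𝕜 : Type*} [NormedField 𝕜] [ProperSpace 𝕜]
    [MeasurableSpace 𝕜] [BorelSpace 𝕜] (μ : Measure 𝕜) [μ.IsAddHaarMeasure] {a : 𝕜}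
    (ha : ‖a‖ = 1) : MeasurePreserving (a * ·) μ μ := by
  have ha₀ : a ≠ 0 := norm_ne_zero_iff.mp (by simp [ha])
  let unitBall : PositiveCompacts 𝕜 :=
    ⟨⟨Metric.closedBall 0 1, isCompact_closedBall 0 1⟩,
      ⟨0, mem_interior_iff_mem_nhds.mpr (Metric.closedBall_mem_nhds 0 one_pos)⟩⟩
  refine (ContinuousLinearEquiv.smulLeft (Units.mk0 a ha₀) : 𝕜 ≃L[𝕜] 𝕜).toContinuousAddEquiv
    |>.measurePreserving_of_preimage_eq μ unitBall ?_
  ext x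
  change a * x ∈ Metric.closedBall 0 1 ↔ x ∈ Metric.closedBall 0 1
  simp [ha]

theorem integral_eq_zero_of_comp_eq_smul {α 𝕜 E : Type*} [MeasurableSpace α] {μ : Measure α}
    [NormedDivisionRing 𝕜] [NormedAddCommGroup E] [NormedSpace ℝ E] [Module 𝕜 E]
    [NormSMulClass 𝕜 E] [SMulCommClass ℝ 𝕜 E] {T : α → α} (hT : MeasurePreserving T μ μ)
    (hT' : MeasurableEmbedding T) {f : α → E} {c : 𝕜} (hc : c ≠ 1)
    (hf : ∀ x, f (T x) = c • f x) : ∫ x, f x ∂μ = 0 := by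
  have hfix : c • ∫ x, f x ∂μ = ∫ x, f x ∂μ := calc
    c • ∫ x, f x ∂μ = ∫ x, f (T x) ∂μ := by simp only [hf, integral_smul]
    _ = ∫ x, f x ∂μ := hT.integral_comp hT' f
  have : (c - 1) • ∫ x, f x ∂μ = 0 := by rw [sub_smul, one_smul, hfix, sub_self]
  exact (smul_eq_zero.mp this).resolve_left (sub_ne_zero.mpr hc)

theorem IsUltrametricDist.norm_add_eq_left_of_norm_lt {S : Type*} [SeminormedAddGroup S]
    [IsUltrametricDist S] {x y : S} (h : ‖y‖ < ‖x‖) : ‖x + y‖ = ‖x‖ := by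
  rw [norm_add_eq_max_of_norm_ne_norm h.ne', max_eq_left h.le]

theorem IsUltrametricDist.norm_add_eq_iff_of_norm_lt {S : Type*} [SeminormedAddGroup S]
    [IsUltrametricDist S] {x y : S} {r : ℝ} (h : ‖y‖ < r) : ‖x + y‖ = r ↔ ‖x‖ = r := by
  constructor
  · intro hxy
    have := norm_add_eq_left_of_norm_lt (x := x + y) (y := -y) (by rwa [norm_neg, hxy])
    rwa [add_neg_cancel_right, hxy] at this
  · intro hx
    rw [norm_add_eq_left_of_norm_lt (hx ▸ h), hx]

namespace Padic

variable {p : ℕ} [Fact p.Prime]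

theorem norm_le_zpow_pred_or_zpow_succ_le {y : ℚ_[p]} {k : ℤ} (hy : ‖y‖ ≠ (p : ℝ) ^ k) :
    ‖y‖ ≤ (p : ℝ) ^ (k - 1) ∨ (p : ℝ) ^ (k + 1) ≤ ‖y‖ := by
  have hp : (1 : ℝ) < p := mod_cast (Fact.out : p.Prime).one_lt
  rcases eq_or_ne y 0 with rfl | hy₀
  · exact .inl (by rw [norm_zero]; positivity)
  rw [norm_eq_zpow_neg_valuation hy₀] at hy ⊢
  have hne : -y.valuation ≠ k := fun h => hy (by rw [h])
  rcases lt_or_gt_of_ne hne with h | h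
  · exact .inl (zpow_le_zpow_right₀ hp.le (by omega))
  · exact .inr (zpow_le_zpow_right₀ hp.le (by omega))

noncomputable def extendUnits {R : Type*} [MonoidWithZero R] (χ : ℤ_[p]ˣ →* Rˣ) (z : ℚ_[p]) :
    R :=
  if h : ‖z‖ = 1 then χ (PadicInt.mkUnits h) else 0

section extendUnits

variable {R : Type*} [MonoidWithZero R] (χ : ℤ_[p]ˣ →* Rˣ)

theorem extendUnits_of_norm_ne_one {z : ℚ_[p]} (hz : ‖z‖ ≠ 1) : extendUnits χ z = 0 :=
  dif_neg hz

theorem extendUnits_units_mul (a : ℤ_[p]ˣ) (z : ℚ_[p]) :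
    extendUnits χ ((a : ℤ_[p]) * z) = χ a * extendUnits χ z := by
  have ha : ‖((a : ℤ_[p]) : ℚ_[p])‖ = 1 := PadicInt.norm_units a
  by_cases hz : ‖z‖ = 1
  · have haz : ‖((a : ℤ_[p]) : ℚ_[p]) * z‖ = 1 := by rw [norm_mul, ha, hz, one_mul]
    have hmk : PadicInt.mkUnits haz = a * PadicInt.mkUnits hz := Units.ext rfl
    simp only [extendUnits, dif_pos hz, dif_pos haz, hmk, map_mul, Units.val_mul]
  · have haz : ‖((a : ℤ_[p]) : ℚ_[p]) * z‖ ≠ 1 := by rwa [norm_mul, ha, one_mul]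
    rw [extendUnits_of_norm_ne_one χ hz, extendUnits_of_norm_ne_one χ haz, mul_zero]

theorem extendUnits_add_of_norm_lt_one {s : ℚ_[p]} (hs : ‖s‖ < 1)
    (hχ : ∀ u : ℤ_[p]ˣ, ‖(u : ℤ_[p]) - 1‖ ≤ ‖s‖ → χ u = 1) (z : ℚ_[p]) :
    extendUnits χ (z + s) = extendUnits χ z := by
  have hnorm := IsUltrametricDist.norm_add_eq_iff_of_norm_lt (x := z) hs
  by_cases hz : ‖z‖ = 1
  · have hzs : ‖z + s‖ = 1 := hnorm.mpr hz
    set u := PadicInt.mkUnits hz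
    set u' := PadicInt.mkUnits hzs
    have hclose : ‖((u⁻¹ * u' : ℤ_[p]ˣ) : ℤ_[p]) - 1‖ = ‖s‖ := by
      rw [Units.val_mul, ← u.inv_mul, ← mul_sub, norm_mul, PadicInt.norm_units, one_mul,
        PadicInt.norm_def]
      push_cast [u, u', PadicInt.mkUnits_eq]
      rw [add_sub_cancel_left]
    simp only [extendUnits, dif_pos hz, dif_pos hzs]
    change ((χ u' : Rˣ) : R) = χ u
    rw [← mul_inv_cancel_left u u', map_mul, hχ _ hclose.le, mul_one]
  · rw [extendUnits_of_norm_ne_one χ hz, extendUnits_of_norm_ne_one χ (mt hnorm.mp hz)]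

end extendUnits

section GaussIntegral

variable [MeasurableSpace ℚ_[p]] [BorelSpace ℚ_[p]] (μ : Measure ℚ_[p]) [μ.IsAddHaarMeasure]
  (ω : ℤ_[p]ˣ →* ℂˣ) {ψ : ℚ_[p] → ℂ}

theorem integral_extendUnits_mul_eq_zero_of_dilation (hψ_hom : ∀ x y, ψ (x + y) = ψ x * ψ y)
    (hψ_triv : ∀ x : ℚ_[p], ‖x‖ ≤ 1 → ψ x = 1)
    {y : ℚ_[p]} {a : ℤ_[p]ˣ} (hya : ‖y‖ * ‖(a : ℤ_[p]) - 1‖ ≤ 1) (hωa : ω a ≠ 1) :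
    ∫ z, extendUnits ω z * ψ (y * z) ∂μ = 0 := by
  have ha : ‖((a : ℤ_[p]) : ℚ_[p])‖ = 1 := PadicInt.norm_units a
  have ha₀ : ((a : ℤ_[p]) : ℚ_[p]) ≠ 0 := norm_ne_zero_iff.mp (by simp [ha])
  refine integral_eq_zero_of_comp_eq_smul (measurePreserving_mul_left_of_norm_eq_one μ ha)
    (Homeomorph.mulLeft₀ _ ha₀).measurableEmbedding (c := (ω a : ℂ))
    (fun h => hωa (Units.val_eq_one.mp h)) fun z => ?_
  rw [extendUnits_units_mul, smul_eq_mul, mul_assoc]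
  congr 1
  by_cases hz : ‖z‖ = 1
  · have hsmall : ‖y * z * ((a : ℤ_[p]) - 1 : ℤ_[p])‖ ≤ 1 := by
      rwa [norm_mul, norm_mul, hz, mul_one, ← PadicInt.norm_def]
    have hsplit : y * ((a : ℤ_[p]) * z) = y * z + y * z * ((a : ℤ_[p]) - 1 : ℤ_[p]) := by
      push_cast; ring
    rw [hsplit, hψ_hom, hψ_triv _ hsmall, mul_one]
  · rw [extendUnits_of_norm_ne_one ω hz, zero_mul, zero_mul]

theorem integral_extendUnits_mul_eq_zero_of_translation
    (hψ_hom : ∀ x y, ψ (x + y) = ψ x * ψ y) {y s : ℚ_[p]} (hs : ‖s‖ < 1)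
    (hω : ∀ u : ℤ_[p]ˣ, ‖(u : ℤ_[p]) - 1‖ ≤ ‖s‖ → ω u = 1) (hψs : ψ (y * s) ≠ 1) :
    ∫ z, extendUnits ω z * ψ (y * z) ∂μ = 0 := by
  refine integral_eq_zero_of_comp_eq_smul (measurePreserving_add_right μ s)
    (Homeomorph.addRight s).measurableEmbedding hψs fun z => ?_
  rw [extendUnits_add_of_norm_lt_one ω hs hω, mul_add, hψ_hom, smul_eq_mul]
  ring

end GaussIntegral

end Padic

open scoped Classical in
theorem gauss_sum_vanishes_general
    (p : ℕ) [Fact p.Prime]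
    [MeasurableSpace ℚ_[p]] [BorelSpace ℚ_[p]]
    (μ : MeasureTheory.Measure ℚ_[p]) [μ.IsAddHaarMeasure]
    (ψ : ℚ_[p] → ℂ)
    (hψ_hom : ∀ x y : ℚ_[p], ψ (x + y) = ψ x * ψ y)
    (hψ_triv : ∀ x : ℚ_[p], ‖x‖ ≤ 1 → ψ x = 1)
    (hψ_nontriv : ∃ x₀ : ℚ_[p], ‖x₀‖ ≤ p ∧ ψ x₀ ≠ 1)
    (c : ℕ) (hc : 1 ≤ c)
    (ω : ℤ_[p]ˣ →* ℂˣ)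
    (hω_triv : ∀ z : ℤ_[p]ˣ, ‖(z : ℤ_[p]) - 1‖ ≤ (p : ℝ) ^ (-(c : ℤ)) → ω z = 1)
    (hω_nontriv : ∃ z₀ : ℤ_[p]ˣ, ‖(z₀ : ℤ_[p]) - 1‖ ≤ (p : ℝ) ^ (-((c : ℤ) - 1)) ∧ ω z₀ ≠ 1)
    (y : ℚ_[p]) (hy : ‖y‖ ≠ (p : ℝ) ^ (c : ℤ)) :
    ∫ z in {z : ℚ_[p] | ‖z‖ = 1},
      (if h : ‖z‖ = 1 then ((ω (PadicInt.mkUnits h) : ℂˣ) : ℂ) else 0) * ψ (y * z) ∂μ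
      = 0 := by
  have hp : (1 : ℝ) < p := mod_cast (Fact.out : p.Prime).one_lt
  change ∫ z in {z : ℚ_[p] | ‖z‖ = 1}, Padic.extendUnits ω z * ψ (y * z) ∂μ = 0
  rw [setIntegral_eq_integral_of_forall_compl_eq_zero fun z hz =>
    by rw [Padic.extendUnits_of_norm_ne_one ω hz, zero_mul]]
  rcases Padic.norm_le_zpow_pred_or_zpow_succ_le hy with hsmall | hlarge
  · obtain ⟨z₀, hz₀, hωz₀⟩ := hω_nontriv
    refine Padic.integral_extendUnits_mul_eq_zero_of_dilation μ ω hψ_hom hψ_triv ?_ hωz₀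
    calc ‖y‖ * ‖(z₀ : ℤ_[p]) - 1‖ ≤ (p : ℝ) ^ ((c : ℤ) - 1) * (p : ℝ) ^ (-((c : ℤ) - 1)) :=
          mul_le_mul hsmall hz₀ (norm_nonneg _) (by positivity)
      _ = 1 := by rw [← zpow_add₀ (by positivity), add_neg_cancel, zpow_zero]
  · obtain ⟨x₀, hx₀, hψx₀⟩ := hψ_nontriv
    have hy₀ : y ≠ 0 := norm_pos_iff.mp (lt_of_lt_of_le (by positivity) hlarge)
    have hs : ‖x₀ / y‖ ≤ (p : ℝ) ^ (-(c : ℤ)) := calc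
      ‖x₀ / y‖ ≤ p / (p : ℝ) ^ ((c : ℤ) + 1) := by
        rw [norm_div]; gcongr
      _ = (p : ℝ) ^ (-(c : ℤ)) := by
        rw [zpow_add_one₀ (by positivity), zpow_neg, div_mul_cancel_right₀ (by positivity)]
    have hs_lt_one : (p : ℝ) ^ (-(c : ℤ)) < 1 := zpow_lt_one_of_neg₀ hp (by omega)
    refine Padic.integral_extendUnits_mul_eq_zero_of_translation μ ω hψ_hom
      (hs.trans_lt hs_lt_one) (fun u hu => hω_triv u (hu.trans hs)) ?_
    rwa [mul_div_cancel₀ _ hy₀]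

open scoped Classical in
/-- **Vanishing of p-adic Gauss sums.** Let `ψ` be an additive character of `ℚ_p` with
conductor `ℤ_p` (a continuous hom `(ℚ_p,+) → (ℂˣ of modulus 1)` trivial on `ℤ_p` but not on
`p⁻¹ℤ_p`), and let `ω : ℤ_pˣ → ℂˣ` be a continuous character with conductor exponent
`c ≥ 1` (trivial on `1 + p^c ℤ_p`, nontrivial on `1 + p^{c-1} ℤ_p`).  For any Haar measure
`μ` on `(ℚ_p, +)` and any `y ∈ ℚ_p` with `‖y‖ ≠ p^c`, the Gauss sum
`∫_{ℤ_pˣ} ω(z) ψ(yz) dμ(z)` vanishes.  Here `ℤ_pˣ = {z ∈ ℚ_p : ‖z‖ = 1}` and membership in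
`p^k ℤ_p` is expressed as `‖·‖ ≤ p^{-k}`. -/
theorem gauss_sum_vanishes
    (p : ℕ) [Fact p.Prime]
    [MeasurableSpace ℚ_[p]] [BorelSpace ℚ_[p]]
    (μ : MeasureTheory.Measure ℚ_[p]) [μ.IsAddHaarMeasure]
    (ψ : ℚ_[p] → ℂ)
    (hψ_cont : Continuous ψ)
    (hψ_hom : ∀ x y : ℚ_[p], ψ (x + y) = ψ x * ψ y)
    (hψ_circ : ∀ x : ℚ_[p], ‖ψ x‖ = 1)
    (hψ_triv : ∀ x : ℚ_[p], ‖x‖ ≤ 1 → ψ x = 1)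
    (hψ_nontriv : ∃ x₀ : ℚ_[p], ‖x₀‖ ≤ p ∧ ψ x₀ ≠ 1)
    (c : ℕ) (hc : 1 ≤ c)
    (ω : ℤ_[p]ˣ →* ℂˣ)
    (hω_cont : Continuous ω)
    (hω_triv : ∀ z : ℤ_[p]ˣ, ‖(z : ℤ_[p]) - 1‖ ≤ (p : ℝ) ^ (-(c : ℤ)) → ω z = 1)
    (hω_nontriv : ∃ z₀ : ℤ_[p]ˣ, ‖(z₀ : ℤ_[p]) - 1‖ ≤ (p : ℝ) ^ (-((c : ℤ) - 1)) ∧ ω z₀ ≠ 1)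
    (y : ℚ_[p]) (hy : ‖y‖ ≠ (p : ℝ) ^ (c : ℤ)) :
    ∫ z in {z : ℚ_[p] | ‖z‖ = 1},
      (if h : ‖z‖ = 1 then ((ω (PadicInt.mkUnits h) : ℂˣ) : ℂ) else 0) * ψ (y * z) ∂μ
      = 0 :=
  gauss_sum_vanishes_general p μ ψ hψ_hom hψ_triv hψ_nontriv c hc ω hω_triv hω_nontriv y hy
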